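/- arXiv:2212.05002 — 2 statements merged into one kernel-verified Lean document; each statement's English description precedes it below -/
import Mathlib

section
/- Let w be a fully commutative permutation in S_n and let ŵ be its boolean core (the unique boolean permutation with w = ŵ·w', ℓ(w) = ℓ(ŵ)+ℓ(w'), and supp(ŵ) = supp(w)). Then Row₁(P(ŵ)) ⊇ Row₁(P(w)) and Row₂(P(ŵ)) ⊆ Row₂(P(w)). -/
/-- The value in position `j` (0-indexed) of the one-line notation of `w`,
extended by the identity outside the range `[0, n)`. -/
def entry {n : ℕ} (w : Equiv.Perm (Fin n)) (j : ℕ) : ℕ :=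
  if h : j < n then (w ⟨j, h⟩ : ℕ) else j

/-- One-line notation of a permutation, as a list of natural numbers (0-indexed values). -/
def oneLine {n : ℕ} (w : Equiv.Perm (Fin n)) : List ℕ :=
  List.ofFn (fun i => (w i : ℕ))

/-- A permutation is fully commutative iff it avoids the pattern 321. -/
def FullyCommutative {n : ℕ} (w : Equiv.Perm (Fin n)) : Prop :=
  ¬ ∃ i j k : Fin n, i < j ∧ j < k ∧ w k < w j ∧ w j < w i

/-- A permutation is boolean iff it avoids the patterns 321 and 3412. -/
def BooleanPerm {n : ℕ} (w : Equiv.Perm (Fin n)) : Prop :=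
  FullyCommutative w ∧
    ¬ ∃ i j k l : Fin n, i < j ∧ j < k ∧ k < l ∧
        w k < w l ∧ w l < w i ∧ w i < w j

/-- The Coxeter length of a permutation: its number of inversions. -/
def invCount {n : ℕ} (w : Equiv.Perm (Fin n)) : ℕ :=
  (Finset.univ.filter fun p : Fin n × Fin n => p.1 < p.2 ∧ w p.2 < w p.1).card

/-- The support of `w`: the set of (0-indexed) indices `i` such that the simple
transposition `s_i` appears in some (equivalently, every) reduced word of `w`;
equivalently, `{w(0),…,w(i)} ≠ {0,…,i}`, i.e. `max {w(j) : j ≤ i} > i`. -/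
def Supp {n : ℕ} (w : Equiv.Perm (Fin n)) : Set ℕ :=
  {i | ∃ j : Fin n, (j : ℕ) ≤ i ∧ i < (w j : ℕ)}

/-- The simple transposition `s_i`, swapping positions `i` and `i+1` (0-indexed). -/
def simpleTr {n : ℕ} (i : ℕ) (h : i + 1 < n) : Equiv.Perm (Fin n) :=
  Equiv.swap ⟨i, by omega⟩ ⟨i + 1, h⟩

/-- Schensted row insertion of a value into a tableau (a list of rows). -/
def rowInsert : List (List ℕ) → ℕ → List (List ℕ)
  | [], x => [[x]]
  | r :: rest, x =>
    match r.find? (fun y => decide (x < y)) with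
    | none => (r ++ [x]) :: rest
    | some y => (r.map fun z => if z = y then x else z) :: rowInsert rest y

/-- RSK insertion tableau of a list. -/
def RSKList (l : List ℕ) : List (List ℕ) := l.foldl rowInsert []

/-- RSK insertion tableau `P(w)` of a permutation. -/
def RSKP {n : ℕ} (w : Equiv.Perm (Fin n)) : List (List ℕ) := RSKList (oneLine w)

/-- RSK recording tableau `Q(w) = P(w⁻¹)`. -/
def RSKQ {n : ℕ} (w : Equiv.Perm (Fin n)) : List (List ℕ) := RSKP w⁻¹

/-- The set of entries in the first row of a tableau. -/
def Row1 (T : List (List ℕ)) : Finset ℕ := (T.getD 0 []).toFinset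

/-- The set of entries in the second row of a tableau. -/
def Row2 (T : List (List ℕ)) : Finset ℕ := (T.getD 1 []).toFinset

/-- `BumpsAt l k z` : during the RSK insertion of the list `l`, the insertion of
the `(k+1)`-st letter of `l` bumps the value `z` from the first row to the
second row (`z` is the smallest first-row entry larger than the inserted letter). -/
def BumpsAt (l : List ℕ) (k : ℕ) (z : ℕ) : Prop :=
  k < l.length ∧
    ((RSKList (l.take k)).getD 0 []).find? (fun y => decide (l.getD k 0 < y)) = some z

/-- `Bumps l b z` : during the RSK insertion of `l`, the value `b` bumps the
value `z` from the first row to the second row. -/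
def Bumps (l : List ℕ) (b z : ℕ) : Prop :=
  ∃ k, l.getD k 0 = b ∧ BumpsAt l k z

/-- A finite set of naturals is crowded if some integer interval `[y, y+2x]`
(with `x > 0`) contains more than `x+1` of its elements. -/
def CrowdedSet (L : Finset ℕ) : Prop :=
  ∃ x y : ℤ, 0 < x ∧
    x + 1 < ((L.filter fun a : ℕ => y ≤ (a : ℤ) ∧ (a : ℤ) ≤ y + 2 * x).card : ℤ)

/-- A fully commutative permutation is crowded if the second row of its RSK
insertion tableau is a crowded set. -/
def CrowdedPerm {n : ℕ} (w : Equiv.Perm (Fin n)) : Prop :=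
  CrowdedSet (Row2 (RSKP w))

/-- Covering relation of the right weak order. -/
def RWCovers {n : ℕ} (u v : Equiv.Perm (Fin n)) : Prop :=
  ∃ i, ∃ h : i + 1 < n, v = u * simpleTr i h ∧ invCount v = invCount u + 1

/-- The right weak order on `S_n`. -/
def RightWeakLE {n : ℕ} : Equiv.Perm (Fin n) → Equiv.Perm (Fin n) → Prop :=
  Relation.ReflTransGen RWCovers

/-- Covering relation of the left weak order. -/
def LWCovers {n : ℕ} (u v : Equiv.Perm (Fin n)) : Prop :=
  ∃ i, ∃ h : i + 1 < n, v = simpleTr i h * u ∧ invCount v = invCount u + 1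

/-- The left weak order on `S_n`. -/
def LeftWeakLE {n : ℕ} : Equiv.Perm (Fin n) → Equiv.Perm (Fin n) → Prop :=
  Relation.ReflTransGen LWCovers

/-- A minimal crowded permutation: a crowded fully commutative permutation all of
whose strict predecessors (among fully commutative permutations) in the right
weak order are uncrowded. -/
def MinimalCrowded {n : ℕ} (w : Equiv.Perm (Fin n)) : Prop :=
  FullyCommutative w ∧ CrowdedPerm w ∧
    ∀ v : Equiv.Perm (Fin n), FullyCommutative v → RightWeakLE v w → v ≠ w →
      ¬ CrowdedPerm v

/-- `l` is an increasing subsequence of the one-line notation of `w`. -/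
def IncreasingSubseq {n : ℕ} (w : Equiv.Perm (Fin n)) (l : List ℕ) : Prop :=
  l.Sublist (oneLine w) ∧ l.Pairwise (· < ·)

/-- The length of a longest increasing subsequence of `w`. -/
noncomputable def lisLen {n : ℕ} (w : Equiv.Perm (Fin n)) : ℕ :=
  sSup {k | ∃ l : List ℕ, IncreasingSubseq w l ∧ l.length = k}

/-- A consecutive occurrence of the pattern 415263 starting at (0-indexed) position `i`. -/
def Consec415263 {n : ℕ} (w : Equiv.Perm (Fin n)) (i : ℕ) : Prop :=
  i + 5 < n ∧
    entry w (i + 1) < entry w (i + 3) ∧ entry w (i + 3) < entry w (i + 5) ∧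
    entry w (i + 5) < entry w i ∧ entry w i < entry w (i + 2) ∧
    entry w (i + 2) < entry w (i + 4)

/-- A consecutive occurrence of the pattern 315264 starting at (0-indexed) position `i`. -/
def Consec315264 {n : ℕ} (w : Equiv.Perm (Fin n)) (i : ℕ) : Prop :=
  i + 5 < n ∧
    entry w (i + 1) < entry w (i + 3) ∧ entry w (i + 3) < entry w i ∧
    entry w i < entry w (i + 5) ∧ entry w (i + 5) < entry w (i + 2) ∧
    entry w (i + 2) < entry w (i + 4)

/-- An occurrence (not necessarily consecutive) of the pattern 415263 in `w`,
at positions `p 0 < p 1 < ⋯ < p 5`. -/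
def Occ415263 {n : ℕ} (w : Equiv.Perm (Fin n)) (p : Fin 6 → Fin n) : Prop :=
  StrictMono p ∧
    w (p 1) < w (p 3) ∧ w (p 3) < w (p 5) ∧ w (p 5) < w (p 0) ∧
    w (p 0) < w (p 2) ∧ w (p 2) < w (p 4)

/-!
Write `w = ŵ · w'` with lengths adding. Removing right descents of `w'` one at a time gives a
chain `w = u₀ > u₁ > ⋯ > ŵ` in the right weak order, each step `uₖ₊₁ = uₖ · sᵢ` turning two
adjacent letters `b > a` of the one-line notation into `a b`. Weak-order predecessors of a
321-avoiding permutation avoid 321, so it suffices to compare the first rows of `P` for the words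
`p b a m` and `p a b m`. On entry sets, inserting `x` into the first row replaces the least entry
above `x` by `x`; this operation is monotone under inclusion. After the prefix `p` no first-row
entry exceeds `b` (that entry, `b` and `a` would form a 321), and then inserting `b, a` yields a
subset of what `a, b` yields; monotonicity carries the inclusion through `m`.

The second row of `P(v)` is the first row of the word of letters bumped out of the first row, so
it is disjoint from `Row₁(P(v))`. For a 321-avoiding word the bumped letters increase, so the
second row is exactly the complement of the first, and the inclusion for `Row₂` follows from the
one for `Row₁`.
-/

namespace Schensted

def insertRow (r : List ℕ) (x : ℕ) : List ℕ :=
  match r.find? (x < ·) with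
  | none => r ++ [x]
  | some y => r.map fun z => if z = y then x else z

def insertStep (s : List ℕ × List ℕ) (x : ℕ) : List ℕ × List ℕ :=
  (insertRow s.1 x, s.2 ++ (s.1.find? (x < ·)).toList)

def firstRowState (l : List ℕ) : List ℕ × List ℕ := l.foldl insertStep ([], [])

def firstRow (l : List ℕ) : List ℕ := (firstRowState l).1

def bumpSeq (l : List ℕ) : List ℕ := (firstRowState l).2

@[simp] lemma firstRow_nil : firstRow [] = [] := rfl

@[simp] lemma bumpSeq_nil : bumpSeq [] = [] := rfl

@[simp] lemma firstRow_concat (l : List ℕ) (x : ℕ) :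
    firstRow (l ++ [x]) = insertRow (firstRow l) x := by
  simp [firstRow, firstRowState, insertStep]

@[simp] lemma bumpSeq_concat (l : List ℕ) (x : ℕ) :
    bumpSeq (l ++ [x]) = bumpSeq l ++ ((firstRow l).find? (x < ·)).toList := by
  simp [bumpSeq, firstRow, firstRowState, insertStep]

lemma rowInsert_cons (r : List ℕ) (rest : List (List ℕ)) (x : ℕ) :
    rowInsert (r :: rest) x = insertRow r x :: (r.find? (x < ·)).toList.foldl rowInsert rest := by
  unfold rowInsert insertRow
  cases r.find? (x < ·) <;> rfl

lemma foldl_rowInsert_cons (m : List ℕ) (s : List ℕ × List ℕ) (rest : List (List ℕ)) :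
    m.foldl rowInsert (s.1 :: s.2.foldl rowInsert rest)
      = (m.foldl insertStep s).1 :: (m.foldl insertStep s).2.foldl rowInsert rest := by
  induction m generalizing s with
  | nil => rfl
  | cons x m ih =>
    simp only [List.foldl_cons, rowInsert_cons, ← List.foldl_append]
    exact ih (insertStep s x)

lemma RSKList_cons (x : ℕ) (l : List ℕ) :
    RSKList (x :: l) = firstRow (x :: l) :: RSKList (bumpSeq (x :: l)) :=
  foldl_rowInsert_cons l ([x], []) []

lemma row1_RSKList (l : List ℕ) : Row1 (RSKList l) = (firstRow l).toFinset := by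
  cases l with
  | nil => rfl
  | cons x l => rw [RSKList_cons]; rfl

lemma row2_RSKList (l : List ℕ) : Row2 (RSKList l) = (firstRow (bumpSeq l)).toFinset := by
  cases l with
  | nil => rfl
  | cons x l => rw [RSKList_cons, ← row1_RSKList]; rfl

lemma insertRow_of_find?_eq_none {r : List ℕ} {x : ℕ} (h : r.find? (x < ·) = none) :
    insertRow r x = r ++ [x] := by
  simp [insertRow, h]

lemma insertRow_of_find?_eq_some {r : List ℕ} {x y : ℕ} (hr : r.Pairwise (· < ·))
    (h : r.find? (x < ·) = some y) :
    ∃ r₁ r₂, r = r₁ ++ y :: r₂ ∧ insertRow r x = r₁ ++ x :: r₂ ∧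
      (∀ c ∈ r₁, ¬ x < c) ∧ x < y ∧ ∀ c ∈ r₂, y < c := by
  obtain ⟨hxy, r₁, r₂, rfl, hr₁⟩ := List.find?_eq_some_iff_append.mp h
  simp only [decide_eq_true_eq, Bool.not_eq_true', decide_eq_false_iff_not] at hxy hr₁
  have hr₂ : ∀ c ∈ r₂, y < c := (List.pairwise_cons.mp (List.pairwise_append.mp hr).2.1).1
  refine ⟨r₁, r₂, rfl, ?_, hr₁, hxy, hr₂⟩
  have hne : ∀ c ∈ r₁ ++ r₂, c ≠ y := by
    intro c hc hcy
    subst hcy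
    rcases List.mem_append.mp hc with hc | hc
    · exact hr₁ c hc hxy
    · exact lt_irrefl c (hr₂ c hc)
  simp only [insertRow, h, List.map_append, List.map_cons]
  rw [List.map_congr_left (fun c hc => if_neg (hne c (List.mem_append_left _ hc))),
    List.map_congr_left (fun c hc => if_neg (hne c (List.mem_append_right _ hc)))]
  simp

lemma mem_of_mem_insertRow {r : List ℕ} {x z : ℕ} (hz : z ∈ insertRow r x) : z = x ∨ z ∈ r := by
  unfold insertRow at hz
  split at hz
  · simpa [or_comm] using hz
  · obtain ⟨c, hc, rfl⟩ := List.mem_map.mp hz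
    split_ifs <;> simp_all

lemma pairwise_insertRow {r : List ℕ} {x : ℕ} (hr : r.Pairwise (· < ·)) (hx : x ∉ r) :
    (insertRow r x).Pairwise (· < ·) := by
  cases h : r.find? (x < ·) with
  | none =>
    have hlt : ∀ c ∈ r, c < x := fun c hc =>
      lt_of_le_of_ne (not_lt.mp (by simpa using List.find?_eq_none.mp h c hc))
        (fun e => hx (e ▸ hc))
    rw [insertRow_of_find?_eq_none h, List.pairwise_append]
    exact ⟨hr, by simp, by simpa using hlt⟩
  | some y =>
    obtain ⟨r₁, r₂, rfl, hins, hr₁, hxy, hr₂⟩ := insertRow_of_find?_eq_some hr h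
    rw [hins]
    simp only [List.pairwise_append, List.pairwise_cons, List.mem_cons] at hr ⊢
    refine ⟨hr.1, ⟨fun c hc => hxy.trans (hr₂ c hc), hr.2.1.2⟩, ?_⟩
    rintro c hc d (rfl | hd)
    · exact lt_of_le_of_ne (not_lt.mp (hr₁ c hc)) (fun e => hx (by simp [← e, hc]))
    · exact hr.2.2 c hc d (Or.inr hd)

lemma insertRow_append_perm {r : List ℕ} {x : ℕ} (hr : r.Pairwise (· < ·)) :
    (insertRow r x ++ (r.find? (x < ·)).toList).Perm (r ++ [x]) := by
  cases h : r.find? (x < ·) with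
  | none => simp [insertRow_of_find?_eq_none h]
  | some y =>
    obtain ⟨r₁, r₂, rfl, hins, -⟩ := insertRow_of_find?_eq_some hr h
    rw [hins]
    simp only [Option.toList_some, List.append_assoc, List.cons_append]
    exact List.Perm.append_left r₁ (((List.perm_append_singleton y r₂).cons x).trans
      ((List.Perm.swap y x r₂).trans ((List.perm_append_singleton x r₂).symm.cons y)))

lemma mem_of_mem_firstRow {l : List ℕ} {z : ℕ} (hz : z ∈ firstRow l) : z ∈ l := by
  induction l using List.reverseRecOn with
  | nil => simp at hz
  | append_singleton l x ih =>
    rw [firstRow_concat] at hz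
    rcases mem_of_mem_insertRow hz with rfl | hz
    · simp
    · simp [ih hz]

lemma pairwise_firstRow {l : List ℕ} (hl : l.Nodup) : (firstRow l).Pairwise (· < ·) := by
  induction l using List.reverseRecOn with
  | nil => simp
  | append_singleton l x ih =>
    have hx : x ∉ l := fun h => (List.nodup_append.mp hl).2.2 x h x (by simp) rfl
    rw [firstRow_concat]
    exact pairwise_insertRow (ih (hl.sublist (List.sublist_append_left _ _)))
      (fun h => hx (mem_of_mem_firstRow h))

open List in
lemma firstRow_append_bumpSeq_perm {l : List ℕ} (hl : l.Nodup) :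
    (firstRow l ++ bumpSeq l).Perm l := by
  induction l using List.reverseRecOn with
  | nil => simp
  | append_singleton l x ih =>
    have hl' := hl.sublist (List.sublist_append_left _ _)
    rw [firstRow_concat, bumpSeq_concat]
    calc (insertRow (firstRow l) x ++ (bumpSeq l ++ ((firstRow l).find? (x < ·)).toList)).Perm
          (insertRow (firstRow l) x ++ ((firstRow l).find? (x < ·)).toList ++ bumpSeq l) := by
          rw [List.append_assoc]; exact List.perm_append_comm.append_left _
      _ ~ firstRow l ++ [x] ++ bumpSeq l :=
          (insertRow_append_perm (pairwise_firstRow hl')).append_right _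
      _ ~ firstRow l ++ bumpSeq l ++ [x] := by
          simpa only [List.append_assoc] using List.perm_append_comm.append_left _
      _ ~ l ++ [x] := (ih hl').append_right _

lemma firstRow_eq_self {l : List ℕ} (hl : l.Pairwise (· < ·)) : firstRow l = l := by
  induction l using List.reverseRecOn with
  | nil => rfl
  | append_singleton l x ih =>
    rw [List.pairwise_append] at hl
    rw [firstRow_concat, ih hl.1, insertRow_of_find?_eq_none]
    simpa [List.find?_eq_none] using fun c hc => (hl.2.2 c hc x (by simp)).le

/-- Row insertion on entry sets: the least entry of `S` above `x`, if any, is replaced by `x`. -/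
def rowInsertSet (S : Finset ℕ) (x : ℕ) : Finset ℕ :=
  insert x {z ∈ S | ¬ x < z ∨ ∃ c ∈ S, x < c ∧ c < z}

lemma mem_rowInsertSet {S : Finset ℕ} {x z : ℕ} :
    z ∈ rowInsertSet S x ↔ z = x ∨ z ∈ S ∧ (¬ x < z ∨ ∃ c ∈ S, x < c ∧ c < z) := by
  simp [rowInsertSet]

lemma rowInsertSet_mono {A B : Finset ℕ} (h : A ⊆ B) (x : ℕ) :
    rowInsertSet A x ⊆ rowInsertSet B x := by
  intro z
  simp only [mem_rowInsertSet]
  rintro (rfl | ⟨hz, hz' | ⟨c, hc, hxc⟩⟩)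
  · exact Or.inl rfl
  · exact Or.inr ⟨h hz, Or.inl hz'⟩
  · exact Or.inr ⟨h hz, Or.inr ⟨c, h hc, hxc⟩⟩

lemma foldl_rowInsertSet_mono {A B : Finset ℕ} (h : A ⊆ B) (m : List ℕ) :
    m.foldl rowInsertSet A ⊆ m.foldl rowInsertSet B := by
  induction m generalizing A B with
  | nil => exact h
  | cons x m ih => exact ih (rowInsertSet_mono h x)

lemma toFinset_insertRow {r : List ℕ} (hr : r.Pairwise (· < ·)) (x : ℕ) :
    (insertRow r x).toFinset = rowInsertSet r.toFinset x := by
  ext z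
  simp only [List.mem_toFinset, mem_rowInsertSet]
  cases h : r.find? (x < ·) with
  | none =>
    have hr' : ∀ c ∈ r, ¬ x < c := by simpa using List.find?_eq_none.mp h
    rw [insertRow_of_find?_eq_none h]
    simp only [List.mem_append, List.mem_singleton]
    constructor
    · rintro (hz | rfl)
      · exact Or.inr ⟨hz, Or.inl (hr' z hz)⟩
      · exact Or.inl rfl
    · rintro (rfl | ⟨hz, -⟩)
      · exact Or.inr rfl
      · exact Or.inl hz
  | some y =>
    obtain ⟨r₁, r₂, rfl, hins, hr₁, hxy, hr₂⟩ := insertRow_of_find?_eq_some hr h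
    rw [hins]
    simp only [List.mem_append, List.mem_cons]
    constructor
    · rintro (hz | rfl | hz)
      · exact Or.inr ⟨Or.inl hz, Or.inl (hr₁ z hz)⟩
      · exact Or.inl rfl
      · exact Or.inr ⟨Or.inr (Or.inr hz), Or.inr ⟨y, by simp, hxy, hr₂ z hz⟩⟩
    · rintro (rfl | ⟨hz, hxz | ⟨c, hc, hxc, hcz⟩⟩)
      · exact Or.inr (Or.inl rfl)
      · rcases hz with hz | rfl | hz
        · exact Or.inl hz
        · exact absurd hxy hxz
        · exact absurd (hxy.trans (hr₂ z hz)) hxz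
      · rcases hz with hz | rfl | hz
        · exact Or.inl hz
        · rcases hc with hc | rfl | hc
          · exact absurd hxc (hr₁ c hc)
          · exact absurd hcz (lt_irrefl _)
          · exact absurd (hcz.trans (hr₂ c hc)) (lt_irrefl _)
        · exact Or.inr (Or.inr hz)

lemma toFinset_firstRow_append {p m : List ℕ} (hpm : (p ++ m).Nodup) :
    (firstRow (p ++ m)).toFinset = m.foldl rowInsertSet (firstRow p).toFinset := by
  induction m generalizing p with
  | nil => simp
  | cons x m ih =>
    have hp : (p ++ [x]).Nodup := hpm.sublist (by simp)
    rw [show p ++ x :: m = p ++ [x] ++ m by simp, ih (by simpa using hpm), firstRow_concat,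
      toFinset_insertRow (pairwise_firstRow (hp.sublist (by simp)))]
    rfl

lemma rowInsertSet_rowInsertSet_subset {R : Finset ℕ} {a b : ℕ} (hab : a < b)
    (hR : ∀ y ∈ R, y ≤ b) :
    rowInsertSet (rowInsertSet R b) a ⊆ rowInsertSet (rowInsertSet R a) b := by
  have hb : rowInsertSet R b = insert b R := by
    ext z
    simp only [mem_rowInsertSet, Finset.mem_insert]
    constructor
    · rintro (h | ⟨h, -⟩) <;> tauto
    · rintro (h | h)
      · exact Or.inl h
      · exact Or.inr ⟨h, Or.inl (not_lt.mpr (hR z h))⟩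
  intro z
  rw [hb]
  simp only [mem_rowInsertSet, Finset.mem_insert]
  rintro (rfl | ⟨hz, hsurv⟩)
  · exact Or.inr ⟨Or.inl rfl, Or.inl (not_lt.mpr hab.le)⟩
  rcases hz with rfl | hz
  · exact Or.inl rfl
  refine Or.inr ⟨Or.inr ⟨hz, ?_⟩, Or.inl (not_lt.mpr (hR z hz))⟩
  rcases hsurv with h | ⟨c, rfl | hc, hac, hcz⟩
  · exact Or.inl h
  · exact absurd (hcz.trans_le (hR z hz)) (lt_irrefl _)
  · exact Or.inr ⟨c, hc, hac, hcz⟩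

def Avoids321 (l : List ℕ) : Prop :=
  ∀ ⦃a b c : ℕ⦄, [a, b, c].Sublist l → b < a → c < b → False

lemma Avoids321.sublist {l l' : List ℕ} (h : Avoids321 l) (hs : l'.Sublist l) : Avoids321 l' :=
  fun _ _ _ habc => h (habc.trans hs)

theorem firstRow_swap_subset {p m : List ℕ} {a b : ℕ} (hab : a < b)
    (hnd : (p ++ b :: a :: m).Nodup) (hav : Avoids321 (p ++ b :: a :: m)) :
    (firstRow (p ++ b :: a :: m)).toFinset ⊆ (firstRow (p ++ a :: b :: m)).toFinset := by
  have hnd' : (p ++ a :: b :: m).Nodup := ((List.Perm.swap a b m).append_left p).nodup_iff.mp hnd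
  rw [toFinset_firstRow_append hnd, toFinset_firstRow_append hnd']
  refine foldl_rowInsertSet_mono (rowInsertSet_rowInsertSet_subset hab fun y hy => ?_) m
  by_contra! hby
  have hyp : [y].Sublist p := List.singleton_sublist.mpr (mem_of_mem_firstRow (List.mem_toFinset.mp hy))
  exact hav (hyp.append (((List.nil_sublist m).cons_cons a).cons_cons b)) hby hab

lemma mem_bumpSeq_iff {l : List ℕ} (hl : l.Nodup) {z : ℕ} :
    z ∈ bumpSeq l ↔ z ∈ l ∧ z ∉ firstRow l := by
  have hperm := firstRow_append_bumpSeq_perm hl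
  have hdisj := (List.nodup_append.mp (hperm.nodup_iff.mpr hl)).2.2
  rw [← hperm.mem_iff, List.mem_append]
  exact ⟨fun hz => ⟨Or.inr hz, fun hz' => hdisj z hz' z hz rfl⟩, fun ⟨hz, hz'⟩ => hz.resolve_left hz'⟩

lemma least_above_of_find?_eq_some {r : List ℕ} {x y : ℕ} (hr : r.Pairwise (· < ·))
    (h : r.find? (x < ·) = some y) : y ∈ r ∧ x < y ∧ ∀ c ∈ r, c < y → c ≤ x := by
  obtain ⟨r₁, r₂, rfl, -, hr₁, hxy, hr₂⟩ := insertRow_of_find?_eq_some hr h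
  refine ⟨by simp, hxy, fun c hc hcy => ?_⟩
  rcases List.mem_append.mp hc with hc | hc
  · exact not_lt.mp (hr₁ c hc)
  rcases List.mem_cons.mp hc with rfl | hc
  · exact absurd hcy (lt_irrefl c)
  · exact absurd (hr₂ c hc) hcy.not_gt

def BelowInversion (l : List ℕ) (c : ℕ) : Prop :=
  ∃ a b, c ≤ b ∧ b < a ∧ [a, b].Sublist l

lemma BelowInversion.mono {l l' : List ℕ} {c : ℕ} (h : BelowInversion l c) (hs : l.Sublist l') :
    BelowInversion l' c :=
  let ⟨a, b, hcb, hba, hab⟩ := h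
  ⟨a, b, hcb, hba, hab.trans hs⟩

lemma belowInversion_concat {l : List ℕ} {x z c : ℕ} (hz : z ∈ l) (hxz : x < z) (hc : c ≤ x) :
    BelowInversion (l ++ [x]) c :=
  ⟨z, x, hc, hxz, (List.singleton_sublist.mpr hz).append (List.Sublist.refl [x])⟩

lemma Avoids321.le_of_belowInversion {l : List ℕ} {x c : ℕ} (hav : Avoids321 (l ++ [x]))
    (h : BelowInversion l c) : c ≤ x := by
  obtain ⟨a, b, hcb, hba, hab⟩ := h
  by_contra! hxc
  exact hav (hab.append (List.Sublist.refl [x])) hba (hxc.trans_le hcb)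

/-- The second conjunct carries the induction: a later letter `x < c` would complete a 321, so a
letter bumped later exceeds every letter bumped before. -/
theorem pairwise_bumpSeq_and_belowInversion {l : List ℕ} (hl : l.Nodup) (hav : Avoids321 l) :
    (bumpSeq l).Pairwise (· < ·) ∧
      ∀ z ∈ bumpSeq l, ∀ c ∈ firstRow l, c < z → BelowInversion l c := by
  induction l using List.reverseRecOn with
  | nil => simp
  | append_singleton l x ih =>
    have hl' : l.Nodup := hl.sublist (List.sublist_append_left _ _)
    obtain ⟨hbs, hfar⟩ := ih hl' (hav.sublist (List.sublist_append_left _ _))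
    have hr := pairwise_firstRow hl'
    have hbump : ∀ y ∈ ((firstRow l).find? (x < ·)).toList,
        y ∈ firstRow l ∧ x < y ∧ ∀ c ∈ firstRow l, c < y → c ≤ x := fun y hy =>
      least_above_of_find?_eq_some hr (Option.mem_toList.mp hy)
    rw [firstRow_concat, bumpSeq_concat]
    refine ⟨List.pairwise_append.mpr ⟨hbs, ?_, fun z hz y hy => ?_⟩, fun z hz c hc hcz => ?_⟩
    · cases (firstRow l).find? (x < ·) <;> simp
    · obtain ⟨hyr, hxy, -⟩ := hbump y hy
      have hzy : z ≠ y := fun e => ((mem_bumpSeq_iff hl').mp hz).2 (e ▸ hyr)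
      by_contra! hyz
      exact hxy.not_ge (hav.le_of_belowInversion (hfar z hz y hyr (hyz.lt_of_ne hzy.symm)))
    · rcases mem_of_mem_insertRow hc with rfl | hc
      · have hzl : z ∈ l := by
          rcases List.mem_append.mp hz with hz | hz
          · exact ((mem_bumpSeq_iff hl').mp hz).1
          · exact mem_of_mem_firstRow (hbump z hz).1
        exact belowInversion_concat hzl hcz le_rfl
      rcases List.mem_append.mp hz with hz | hz
      · exact (hfar z hz c hc hcz).mono (List.sublist_append_left _ _)
      · obtain ⟨hzr, hxz, hmin⟩ := hbump z hz
        exact belowInversion_concat (mem_of_mem_firstRow hzr) hxz (hmin c hc hcz)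

theorem firstRow_bumpSeq_subset_of_firstRow_subset {l l' : List ℕ} (hl : l.Nodup) (hl' : l'.Nodup)
    (hav : Avoids321 l) (hmem : ∀ z ∈ l', z ∈ l)
    (h : (firstRow l).toFinset ⊆ (firstRow l').toFinset) :
    (firstRow (bumpSeq l')).toFinset ⊆ (firstRow (bumpSeq l)).toFinset := by
  rw [firstRow_eq_self (pairwise_bumpSeq_and_belowInversion hl hav).1]
  intro z hz
  obtain ⟨hzl', hzr'⟩ := (mem_bumpSeq_iff hl').mp (mem_of_mem_firstRow (List.mem_toFinset.mp hz))
  refine List.mem_toFinset.mpr ((mem_bumpSeq_iff hl).mpr ⟨hmem z hzl', fun hzr => hzr' ?_⟩)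
  exact List.mem_toFinset.mp (h (List.mem_toFinset.mpr hzr))

end Schensted

section Permutations

open Schensted

variable {n : ℕ}

lemma oneLine_nodup (w : Equiv.Perm (Fin n)) : (oneLine w).Nodup :=
  List.nodup_ofFn.mpr (Fin.val_injective.comp w.injective)

lemma mem_oneLine {w : Equiv.Perm (Fin n)} {z : ℕ} : z ∈ oneLine w ↔ z < n := by
  simp only [oneLine, List.mem_ofFn]
  exact ⟨fun ⟨i, hi⟩ => hi ▸ (w i).isLt, fun hz => ⟨w⁻¹ ⟨z, hz⟩, by simp⟩⟩

lemma avoids321_oneLine {w : Equiv.Perm (Fin n)} (hw : FullyCommutative w) :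
    Avoids321 (oneLine w) := by
  intro a b c habc hba hcb
  obtain ⟨f, hf⟩ := List.sublist_iff_exists_fin_orderEmbedding_get_eq.mp habc
  have hlen : (oneLine w).length = n := by simp [oneLine]
  set g : Fin 3 → Fin n := fun k => Fin.cast hlen (f k)
  have hg : StrictMono g := fun k k' hkk' => f.strictMono hkk'
  have hval : ∀ k, (w (g k) : ℕ) = [a, b, c].get k := fun k => by
    rw [hf k]; simp [oneLine, g]; rfl
  refine hw ⟨g 0, g 1, g 2, hg (by decide), hg (by decide), ?_, ?_⟩
  · rw [Fin.lt_def, hval, hval]; exact hcb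
  · rw [Fin.lt_def, hval, hval]; exact hba

lemma oneLine_mul_simpleTr (w : Equiv.Perm (Fin n)) {i : ℕ} (h : i + 1 < n) :
    ∃ p m, oneLine w = p ++ (w ⟨i, by omega⟩ : ℕ) :: (w ⟨i + 1, h⟩ : ℕ) :: m ∧
      oneLine (w * simpleTr i h) = p ++ (w ⟨i + 1, h⟩ : ℕ) :: (w ⟨i, by omega⟩ : ℕ) :: m := by
  refine ⟨(oneLine w).take i, (oneLine w).drop (i + 2), ?_, ?_⟩ <;>
  apply List.ext_getElem <;> simp only [oneLine, List.length_ofFn, List.length_append,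
    List.length_take, List.length_cons, List.length_drop]
  any_goals omega
  all_goals
    intro j h₁ h₂
    have hi : min i n = i := by omega
    simp only [hi, List.getElem_append, List.getElem_cons, List.getElem_take, List.getElem_drop,
      List.getElem_ofFn, List.length_take, List.length_ofFn, Equiv.Perm.mul_apply, simpleTr,
      Equiv.swap_apply_def, Fin.ext_iff]
    split_ifs <;> first | omega | (congr 2; ext; simp only; omega)

lemma simpleTr_lt_simpleTr {i : ℕ} (h : i + 1 < n) {a b : Fin n} (hab : a < b)
    (hne : ¬ (a = ⟨i, by omega⟩ ∧ b = ⟨i + 1, h⟩)) : simpleTr i h a < simpleTr i h b := by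
  simp only [simpleTr, Equiv.swap_apply_def]
  split_ifs <;> simp_all [Fin.lt_def, -Fin.val_fin_lt, Fin.ext_iff] <;> omega

def inversions (w : Equiv.Perm (Fin n)) : Finset (Fin n × Fin n) :=
  Finset.univ.filter fun p => p.1 < p.2 ∧ w p.2 < w p.1

lemma invCount_eq_card (w : Equiv.Perm (Fin n)) : invCount w = (inversions w).card := rfl

lemma mem_inversions {w : Equiv.Perm (Fin n)} {p : Fin n × Fin n} :
    p ∈ inversions w ↔ p.1 < p.2 ∧ w p.2 < w p.1 := by
  simp [inversions]

lemma invCount_mul_simpleTr_of_lt {w : Equiv.Perm (Fin n)} {i : ℕ} (h : i + 1 < n)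
    (hw : w ⟨i, by omega⟩ < w ⟨i + 1, h⟩) :
    invCount (w * simpleTr i h) = invCount w + 1 := by
  have hinv : inversions (w * simpleTr i h) = insert (⟨i, by omega⟩, ⟨i + 1, h⟩)
      ((inversions w).map (Equiv.prodCongr (simpleTr i h) (simpleTr i h)).toEmbedding) := by
    ext ⟨a, b⟩
    simp only [inversions, Finset.mem_insert, Finset.mem_map_equiv, Finset.mem_filter,
      Finset.mem_univ, true_and, Equiv.prodCongr_symm, Equiv.prodCongr_apply, Prod.map,
      Equiv.Perm.mul_apply, Prod.mk.injEq, simpleTr, Equiv.symm_swap, Equiv.swap_apply_def]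
    split_ifs <;> simp_all [Fin.lt_def, -Fin.val_fin_lt, Fin.ext_iff] <;> omega
  rw [invCount_eq_card, invCount_eq_card, hinv, Finset.card_insert_of_notMem, Finset.card_map]
  rw [Finset.mem_map_equiv, mem_inversions]
  simp [simpleTr]

lemma invCount_one : invCount (1 : Equiv.Perm (Fin n)) = 0 :=
  Finset.card_eq_zero.mpr (Finset.filter_eq_empty_iff.mpr fun _ _ h => lt_asymm h.1 h.2)

lemma invCount_simpleTr {i : ℕ} (h : i + 1 < n) : invCount (simpleTr i h) = 1 := by
  simpa [invCount_one] using invCount_mul_simpleTr_of_lt (w := 1) h (by simp [Fin.lt_def])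

lemma invCount_mul_le (u v : Equiv.Perm (Fin n)) :
    invCount (u * v) ≤ invCount u + invCount v := by
  have hsub : inversions (u * v) ⊆
      (inversions u).image (fun p => (v⁻¹ p.1, v⁻¹ p.2)) ∪ inversions v := by
    intro p hp
    simp only [mem_inversions, Equiv.Perm.mul_apply, Finset.mem_union, Finset.mem_image,
      Prod.exists] at hp ⊢
    rcases lt_or_gt_of_ne (v.injective.ne hp.1.ne) with hv | hv
    · exact Or.inl ⟨v p.1, v p.2, ⟨hv, hp.2⟩, by simp⟩
    · exact Or.inr ⟨hp.1, hv⟩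
  calc invCount (u * v) ≤ _ := Finset.card_le_card hsub
    _ ≤ _ := Finset.card_union_le _ _
    _ ≤ invCount u + invCount v := Nat.add_le_add_right Finset.card_image_le _

lemma exists_descent_of_ne_one {w : Equiv.Perm (Fin n)} (hw : w ≠ 1) :
    ∃ i, ∃ h : i + 1 < n, w ⟨i + 1, h⟩ < w ⟨i, by omega⟩ := by
  by_contra! hasc
  apply hw
  cases n with
  | zero => exact Subsingleton.elim _ _
  | succ n =>
    have hmono : StrictMono w := Fin.strictMono_iff_lt_succ.mpr fun i =>
      lt_of_le_of_ne (hasc i (Nat.succ_lt_succ i.2)) (w.injective.ne (by simp [Fin.ext_iff]))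
    ext1 x
    exact congrFun ((hmono.range_inj strictMono_id).mp (by simp)) x

lemma simpleTr_mul_self {i : ℕ} (h : i + 1 < n) : simpleTr i h * simpleTr i h = 1 :=
  Equiv.swap_mul_self _ _

lemma exists_invCount_mul_simpleTr_add_one {v : Equiv.Perm (Fin n)} (hv : v ≠ 1) :
    ∃ i, ∃ h : i + 1 < n, invCount (v * simpleTr i h) + 1 = invCount v := by
  obtain ⟨i, h, hdesc⟩ := exists_descent_of_ne_one hv
  refine ⟨i, h, ?_⟩
  have := invCount_mul_simpleTr_of_lt (w := v * simpleTr i h) h (by simpa [simpleTr] using hdesc)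
  rwa [mul_assoc, simpleTr_mul_self, mul_one, eq_comm] at this

theorem rightWeakLE_mul_of_invCount_mul {u v : Equiv.Perm (Fin n)}
    (h : invCount (u * v) = invCount u + invCount v) : RightWeakLE u (u * v) := by
  rcases eq_or_ne v 1 with rfl | hv
  · rw [mul_one]; exact Relation.ReflTransGen.refl
  obtain ⟨i, hi, hvs⟩ := exists_invCount_mul_simpleTr_add_one hv
  have hmul : u * v = u * (v * simpleTr i hi) * simpleTr i hi := by
    rw [mul_assoc, mul_assoc, simpleTr_mul_self, mul_one]
  have hle : invCount (u * v) ≤ invCount (u * (v * simpleTr i hi)) + 1 := by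
    conv_lhs => rw [hmul]
    simpa [invCount_simpleTr] using invCount_mul_le (u * (v * simpleTr i hi)) (simpleTr i hi)
  have hge := invCount_mul_le u (v * simpleTr i hi)
  exact (rightWeakLE_mul_of_invCount_mul (v := v * simpleTr i hi) (by omega)).tail ⟨i, hi, hmul, by omega⟩
termination_by invCount v
decreasing_by omega

lemma exists_ascent_of_rwCovers {u v : Equiv.Perm (Fin n)} (huv : RWCovers u v) :
    ∃ i, ∃ h : i + 1 < n, v = u * simpleTr i h ∧ u ⟨i, by omega⟩ < u ⟨i + 1, h⟩ := by
  obtain ⟨i, h, rfl, hlen⟩ := huv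
  refine ⟨i, h, rfl, lt_of_le_of_ne (not_lt.mp fun hdesc => ?_) (u.injective.ne (by simp))⟩
  have := invCount_mul_simpleTr_of_lt (w := u * simpleTr i h) h (by simpa [simpleTr] using hdesc)
  rw [mul_assoc, simpleTr_mul_self, mul_one] at this
  omega

lemma fullyCommutative_of_rwCovers {u v : Equiv.Perm (Fin n)} (huv : RWCovers u v)
    (hv : FullyCommutative v) : FullyCommutative u := by
  obtain ⟨i, h, rfl, hasc⟩ := exists_ascent_of_rwCovers huv
  rintro ⟨a, b, c, hab, hbc, hcb, hba⟩
  have hs : ∀ x, (u * simpleTr i h) (simpleTr i h x) = u x := fun x => by simp [simpleTr]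
  refine hv ⟨_, _, _, simpleTr_lt_simpleTr h hab ?_, simpleTr_lt_simpleTr h hbc ?_,
    by simpa only [hs] using hcb, by simpa only [hs] using hba⟩
  · rintro ⟨ha, hb⟩; rw [ha, hb] at hba; exact hasc.not_gt hba
  · rintro ⟨hb, hc⟩; rw [hb, hc] at hcb; exact hasc.not_gt hcb

lemma row1_subset_of_rwCovers {u v : Equiv.Perm (Fin n)} (huv : RWCovers u v)
    (hv : FullyCommutative v) : Row1 (RSKP v) ⊆ Row1 (RSKP u) := by
  obtain ⟨i, h, rfl, hasc⟩ := exists_ascent_of_rwCovers huv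
  obtain ⟨p, m, hu, hus⟩ := oneLine_mul_simpleTr u h
  have hnd := oneLine_nodup (u * simpleTr i h)
  have hav := avoids321_oneLine hv
  rw [hus] at hnd hav
  simp only [RSKP, row1_RSKList, hu, hus]
  exact firstRow_swap_subset hasc hnd hav

theorem row1_subset_of_rightWeakLE {u v : Equiv.Perm (Fin n)} (huv : RightWeakLE u v)
    (hv : FullyCommutative v) : Row1 (RSKP v) ⊆ Row1 (RSKP u) := by
  induction huv with
  | refl => exact subset_rfl
  | tail _ hbc ih =>
    exact (row1_subset_of_rwCovers hbc hv).trans (ih (fullyCommutative_of_rwCovers hbc hv))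

theorem row2_subset_of_row1_subset {u w : Equiv.Perm (Fin n)} (hw : FullyCommutative w)
    (h : Row1 (RSKP w) ⊆ Row1 (RSKP u)) : Row2 (RSKP u) ⊆ Row2 (RSKP w) := by
  simp only [RSKP, row1_RSKList, row2_RSKList] at h ⊢
  exact firstRow_bumpSeq_subset_of_firstRow_subset (oneLine_nodup w) (oneLine_nodup u) (avoids321_oneLine hw)
    (fun _ hz => mem_oneLine.mpr (mem_oneLine.mp hz)) h

end Permutations

theorem boolean_core_tableaux_general {n : ℕ} (w wc : Equiv.Perm (Fin n))
    (hw : FullyCommutative w)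
    (hfact : ∃ w' : Equiv.Perm (Fin n),
      w = wc * w' ∧ invCount w = invCount wc + invCount w') :
    Row1 (RSKP w) ⊆ Row1 (RSKP wc) ∧ Row2 (RSKP wc) ⊆ Row2 (RSKP w) := by
  obtain ⟨w', rfl, hlen⟩ := hfact
  have hrow1 := row1_subset_of_rightWeakLE (rightWeakLE_mul_of_invCount_mul hlen) hw
  exact ⟨hrow1, row2_subset_of_row1_subset hw hrow1⟩

/-- **Corollary.** If `ŵ` is the boolean core of the fully commutative
permutation `w`, then `Row₁(P(ŵ)) ⊇ Row₁(P(w))` and `Row₂(P(ŵ)) ⊆ Row₂(P(w))`. -/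
theorem boolean_core_tableaux {n : ℕ} (w wc : Equiv.Perm (Fin n))
    (hw : FullyCommutative w) (hbool : BooleanPerm wc) (hsupp : Supp wc = Supp w)
    (hfact : ∃ w' : Equiv.Perm (Fin n),
      w = wc * w' ∧ invCount w = invCount wc + invCount w') :
    Row1 (RSKP w) ⊆ Row1 (RSKP wc) ∧ Row2 (RSKP wc) ⊆ Row2 (RSKP w) :=
  boolean_core_tableaux_general w wc hw hfact
end

section
/- Let v, w ∈ S_n be fully commutative permutations with w = v·s_i, ℓ(w) = ℓ(v)+1, and i ∈ supp(v). Set M := max{v(j) : j ≤ i} and m := min{v(j) : j ≥ i+1}. Then the one-line notation of v has the form v = ⋯ M a₁ ⋯ a_h v(i) v(i+1) e₁ ⋯ e_j m ⋯, where a₁ < a₂ < ⋯ < a_h < v(i) < m < M < v(i+1) < e₁ < e₂ < ⋯ < e_j; that is, all entries strictly between the positions of M and v(i) are increasing and less than v(i), and all entries strictly between the positions of v(i+1) and m are increasing and greater than v(i+1). -/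
/-!
Since `ℓ(v s_i) = ℓ(v) + 1` we have `v(i) < v(i+1)`, so `w = v s_i` has a descent at `i`. As `w`
avoids 321, no value right of position `i + 1` lies below `v(i)` and none left of `i` lies above
`v(i+1)`; this gives `v(i) < m` and `M < v(i+1)`. The support condition forces `m ≤ i < M`.
Finally, any descent between `M` and `v(i)`, or any entry there above `v(i)`, would form a 321
with `M` in `v`; symmetrically on the right with `m`.
-/

section

variable {n i : ℕ}

theorem entry_eq (w : Equiv.Perm (Fin n)) {j : ℕ} (hj : j < n) : entry w j = w ⟨j, hj⟩ :=
  dif_pos hj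

@[simp]
theorem entry_val (w : Equiv.Perm (Fin n)) (j : Fin n) : entry w j = w j :=
  dif_pos j.isLt

theorem val_simpleTr_apply (h : i + 1 < n) (a : Fin n) :
    (simpleTr i h a : ℕ) =
      if (a : ℕ) = i then i + 1 else if (a : ℕ) = i + 1 then i else a := by
  simp only [simpleTr, Equiv.swap_apply_def, Fin.ext_iff]
  split_ifs <;> simp_all

theorem simpleTr_lt_simpleTr_iff (h : i + 1 < n) {a b : Fin n}
    (hab : ¬((a : ℕ) = i ∧ (b : ℕ) = i + 1))
    (hba : ¬((a : ℕ) = i + 1 ∧ (b : ℕ) = i)) :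
    simpleTr i h a < simpleTr i h b ↔ a < b := by
  rw [Fin.lt_def, Fin.lt_def, val_simpleTr_apply, val_simpleTr_apply]
  split_ifs <;> omega

theorem entry_mul_simpleTr_self (v : Equiv.Perm (Fin n)) (h : i + 1 < n) :
    entry (v * simpleTr i h) i = entry v (i + 1) := by
  simp [entry_eq _ (Nat.lt_of_succ_lt h), entry_eq _ h, simpleTr]

theorem entry_mul_simpleTr_succ (v : Equiv.Perm (Fin n)) (h : i + 1 < n) :
    entry (v * simpleTr i h) (i + 1) = entry v i := by
  simp [entry_eq _ (Nat.lt_of_succ_lt h), entry_eq _ h, simpleTr]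

theorem mul_simpleTr_apply_of_ne (v : Equiv.Perm (Fin n)) (h : i + 1 < n) {a : Fin n}
    (hi : (a : ℕ) ≠ i) (hi' : (a : ℕ) ≠ i + 1) : (v * simpleTr i h) a = v a := by
  rw [Equiv.Perm.mul_apply, simpleTr, Equiv.swap_apply_of_ne_of_ne (Fin.ne_of_val_ne hi)
    (Fin.ne_of_val_ne hi')]

/-- Relabelling positions by `s_i` turns the inversions of `u * s_i` into those of `u`, together
with the pair `(i, i + 1)`. -/
theorem invCount_mul_simpleTr (u : Equiv.Perm (Fin n)) (h : i + 1 < n)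
    (hlt : entry u i < entry u (i + 1)) : invCount (u * simpleTr i h) = invCount u + 1 := by
  set s := simpleTr i h
  have hcard : invCount (u * s) =
      (Finset.univ.filter fun p : Fin n × Fin n => s p.1 < s p.2 ∧ u p.2 < u p.1).card := by
    refine Finset.card_equiv (s.prodCongr s) fun ⟨a, b⟩ => ?_
    simp [s, simpleTr]
  have hinsert : (Finset.univ.filter fun p : Fin n × Fin n => s p.1 < s p.2 ∧ u p.2 < u p.1) =
      insert (⟨i + 1, h⟩, ⟨i, Nat.lt_of_succ_lt h⟩)
        (Finset.univ.filter fun p : Fin n × Fin n => p.1 < p.2 ∧ u p.2 < u p.1) := by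
    rw [entry_eq _ (Nat.lt_of_succ_lt h), entry_eq _ h] at hlt
    ext ⟨a, b⟩
    simp only [Finset.mem_filter, Finset.mem_univ, true_and, Finset.mem_insert, Prod.mk.injEq]
    by_cases hab : (a : ℕ) = i ∧ (b : ℕ) = i + 1
    · obtain ⟨rfl, rfl⟩ : a = ⟨i, Nat.lt_of_succ_lt h⟩ ∧ b = ⟨i + 1, h⟩ :=
        ⟨Fin.ext hab.1, Fin.ext hab.2⟩
      simpa [s, simpleTr, Fin.ext_iff] using hlt.le
    by_cases hba : (a : ℕ) = i + 1 ∧ (b : ℕ) = i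
    · obtain ⟨rfl, rfl⟩ : a = ⟨i + 1, h⟩ ∧ b = ⟨i, Nat.lt_of_succ_lt h⟩ :=
        ⟨Fin.ext hba.1, Fin.ext hba.2⟩
      simpa [s, simpleTr] using hlt
    rw [simpleTr_lt_simpleTr_iff h hab hba]
    simp only [Fin.ext_iff, hba, false_or]
  rw [hcard, hinsert, Finset.card_insert_of_notMem, invCount]
  simp

theorem entry_lt_entry_succ_of_invCount_mul_simpleTr (v : Equiv.Perm (Fin n)) (h : i + 1 < n)
    (hl : invCount (v * simpleTr i h) = invCount v + 1) : entry v i < entry v (i + 1) := by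
  have hne : entry v i ≠ entry v (i + 1) := by
    rw [entry_eq _ (Nat.lt_of_succ_lt h), entry_eq _ h, Ne, Fin.val_inj, v.apply_eq_iff_eq]
    simp
  refine lt_of_le_of_ne (not_lt.mp fun hgt => ?_) hne
  have hw := invCount_mul_simpleTr (v * simpleTr i h) h
    (by rwa [entry_mul_simpleTr_self, entry_mul_simpleTr_succ])
  rw [mul_assoc, simpleTr, Equiv.swap_mul_self, mul_one, ← simpleTr] at hw
  omega

namespace FullyCommutative

variable {v : Equiv.Perm (Fin n)} (hv : FullyCommutative v) {a b c : Fin n}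
include hv

theorem prev_lt_of_next_le (hab : a < b) (hbc : b < c) (hcb : (v c : ℕ) ≤ v b) :
    (v a : ℕ) < v b := by
  by_contra! hba
  have hne : ∀ {x y : Fin n}, x < y → v x ≠ v y := fun hxy => v.injective.ne hxy.ne
  exact hv ⟨a, b, c, hab, hbc, lt_of_le_of_ne hcb (hne hbc).symm,
    lt_of_le_of_ne hba (hne hab).symm⟩

theorem lt_next_of_le_prev (hab : a < b) (hbc : b < c) (hba : (v b : ℕ) ≤ v a) :
    (v b : ℕ) < v c :=
  lt_of_not_ge fun hcb => (hv.prev_lt_of_next_le hab hbc hcb).not_ge hba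

end FullyCommutative

variable {v : Equiv.Perm (Fin n)} {h : i + 1 < n}

theorem entry_lt_of_fullyCommutative_mul_simpleTr (hw : FullyCommutative (v * simpleTr i h))
    (hlt : entry v i < entry v (i + 1)) {q : Fin n} (hq : i + 1 ≤ q) : entry v i < v q := by
  rcases hq.eq_or_lt with hq | hq
  · rwa [hq, entry_val] at hlt
  have := hw.lt_next_of_le_prev (a := ⟨i, Nat.lt_of_succ_lt h⟩) (b := ⟨i + 1, h⟩) (c := q)
    (Fin.lt_def.mpr (Nat.lt_succ_self i)) hq ?_
  · rwa [← entry_eq, entry_mul_simpleTr_succ,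
      mul_simpleTr_apply_of_ne _ _ (by omega) (by omega)] at this
  · rw [← entry_eq, ← entry_eq, entry_mul_simpleTr_succ, entry_mul_simpleTr_self]
    exact hlt.le

theorem lt_entry_succ_of_fullyCommutative_mul_simpleTr
    (hw : FullyCommutative (v * simpleTr i h))
    (hlt : entry v i < entry v (i + 1)) {p : Fin n} (hp : p ≤ i) : v p < entry v (i + 1) := by
  rcases hp.lt_or_eq with hp | hp
  · have := hw.prev_lt_of_next_le (a := p) (b := ⟨i, Nat.lt_of_succ_lt h⟩)
      (c := ⟨i + 1, h⟩) hp (Fin.lt_def.mpr (Nat.lt_succ_self i)) ?_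
    · rwa [← entry_eq _ (j := i), entry_mul_simpleTr_self,
        mul_simpleTr_apply_of_ne _ _ (by omega) (by omega)] at this
    · rw [← entry_eq, ← entry_eq, entry_mul_simpleTr_succ, entry_mul_simpleTr_self]
      exact hlt.le
  · subst hp
    simpa using hlt

theorem exists_le_of_mem_Supp (hsupp : i ∈ Supp v) :
    ∃ q : Fin n, i + 1 ≤ q ∧ (v q : ℕ) ≤ i := by
  obtain ⟨j, hj, hij⟩ := hsupp
  by_contra! hlarge
  set S := Finset.univ.filter fun k : Fin n => (k : ℕ) ≤ i
  have hsub : S.image v.symm ⊆ S := by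
    intro k hk
    obtain ⟨x, hx, rfl⟩ := Finset.mem_image.mp hk
    simp only [S, Finset.mem_filter, Finset.mem_univ, true_and] at hx ⊢
    by_contra! hgt
    exact (hlarge _ hgt).not_ge (by simpa using hx)
  have heq := Finset.eq_of_subset_of_card_le hsub
    (Finset.card_image_of_injective _ v.symm.injective).ge
  have hj : j ∈ S := by simpa [S] using hj
  rw [← heq] at hj
  obtain ⟨x, hx, rfl⟩ := Finset.mem_image.mp hj
  simp only [S, Finset.mem_filter, Finset.mem_univ, true_and, Equiv.apply_symm_apply] at hx hij
  omega

end

/-- **Corollary.** If `i ∈ supp(v)`, then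
`v = ⋯ M a₁ ⋯ a_h v(i) v(i+1) e₁ ⋯ e_j m ⋯` with
`a₁ < ⋯ < a_h < v(i) < m < M < v(i+1) < e₁ < ⋯ < e_j`: every entry strictly
between the positions of `M` and `v(i)` is below `v(i)` and these entries
increase, and every entry strictly between the positions of `v(i+1)` and `m`
exceeds `v(i+1)` and these entries increase. -/
theorem structure_around_3142 {n : ℕ} (v w : Equiv.Perm (Fin n)) (i : ℕ)
    (h : i + 1 < n) (hv : FullyCommutative v) (hw : FullyCommutative w)
    (hwv : w = v * simpleTr i h) (hl : invCount w = invCount v + 1)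
    (hsupp : i ∈ Supp v) (M m : ℕ)
    (hM : IsGreatest {x | ∃ j : Fin n, (j : ℕ) ≤ i ∧ (v j : ℕ) = x} M)
    (hm : IsLeast {x | ∃ j : Fin n, i + 1 ≤ (j : ℕ) ∧ (v j : ℕ) = x} m) :
    ∃ p q : Fin n, (p : ℕ) < i ∧ (v p : ℕ) = M ∧ i + 1 < (q : ℕ) ∧ (v q : ℕ) = m ∧
      entry v i < m ∧ m < M ∧ M < entry v (i + 1) ∧
      (∀ a b : Fin n, (p : ℕ) < (a : ℕ) → (a : ℕ) < (b : ℕ) → (b : ℕ) < i →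
        (v a : ℕ) < (v b : ℕ)) ∧
      (∀ a : Fin n, (p : ℕ) < (a : ℕ) → (a : ℕ) < i → (v a : ℕ) < entry v i) ∧
      (∀ a b : Fin n, i + 1 < (a : ℕ) → (a : ℕ) < (b : ℕ) → (b : ℕ) < (q : ℕ) →
        (v a : ℕ) < (v b : ℕ)) ∧
      (∀ a : Fin n, i + 1 < (a : ℕ) → (a : ℕ) < (q : ℕ) →
        entry v (i + 1) < (v a : ℕ)) := by
  subst hwv
  have hasc := entry_lt_entry_succ_of_invCount_mul_simpleTr v h hl
  obtain ⟨⟨p, hp, rfl⟩, hmax⟩ := hM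
  obtain ⟨⟨q, hq, rfl⟩, hmin⟩ := hm
  have hvi_lt := entry_lt_of_fullyCommutative_mul_simpleTr hw hasc hq
  have hlt_vi1 := lt_entry_succ_of_fullyCommutative_mul_simpleTr hw hasc hp
  have hm_le : (v q : ℕ) ≤ i := by
    obtain ⟨r, hr, hri⟩ := exists_le_of_mem_Supp hsupp
    exact (hmin ⟨r, hr, rfl⟩).trans hri
  have hM_gt : i < v p := by
    obtain ⟨j, hj, hij⟩ := hsupp
    exact hij.trans_le (hmax ⟨j, hj, rfl⟩)
  have hpi : (p : ℕ) < i := hp.lt_of_ne fun hpi => by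
    subst hpi
    rw [entry_val] at hvi_lt
    omega
  have hqi : i + 1 < (q : ℕ) := hq.lt_of_ne' fun hqi => by
    rw [← hqi, entry_val] at hlt_vi1
    omega
  have hi : i < n := Nat.lt_of_succ_lt h
  refine ⟨p, q, hpi, rfl, hqi, rfl, hvi_lt, by omega, hlt_vi1, ?_, ?_, ?_, ?_⟩
  · exact fun a b hpa hab hbi => hv.lt_next_of_le_prev hpa hab (hmax ⟨a, by omega, rfl⟩)
  · intro a hpa hai
    rw [entry_eq v hi]
    exact hv.lt_next_of_le_prev (c := ⟨i, hi⟩) hpa hai (hmax ⟨a, by omega, rfl⟩)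
  · exact fun a b hia hab hbq => hv.prev_lt_of_next_le hab hbq (hmin ⟨b, by omega, rfl⟩)
  · intro a hia haq
    rw [entry_eq v h]
    exact hv.prev_lt_of_next_le (a := ⟨i + 1, h⟩) hia haq (hmin ⟨a, by omega, rfl⟩)
end
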